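/- arXiv:2004.08679 — 3 statements merged into one kernel-verified Lean document; each statement's English description precedes it below -/
import Mathlib

section
/- Let q ∈ (0,1), α, β ∈ ℂ with |α| < 1, z ∈ ℂ∖{0}, and let ψ_n^±(z) = z^{±n}(qz^{±2};q)_∞ · ₂φ₁(z^{±1}τ, z^{±1}τ^{-1}; qz^{±2}; q, αq^{n+1}) where ατ + ατ⁻¹ = βz + βz⁻¹. Then the Wronskian W = ψ_n^+(z)ψ_{n+1}^-(z) - ψ_{n+1}^+(z)ψ_n^-(z) is independent of n and equals z⁻¹(z²;q)_∞(qz⁻²;q)_∞. -/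
/-!
Write `φ_w(y) = ₂φ₁(wτ, wτ⁻¹; qw²; q, y)`, so that
`ψ_n^± = z^{±n} (qz^{±2};q)_∞ φ_{z^{±1}}(αq^{n+1})`. Via the recurrence of the ₂φ₁ coefficients,
comparing coefficients gives the q-difference equation
`(1 - y)(φ_w(y) + w² φ_w(q²y)) = (w² + 1 - w(τ + τ⁻¹)y) φ_w(qy)`. After division by `w` its
coefficients are symmetric in `w ↔ w⁻¹`, so the reduced Wronskian
`W(y) = z⁻¹ φ_z(y) φ_{z⁻¹}(qy) - z φ_z(qy) φ_{z⁻¹}(y)` satisfies `W(qy) = W(y)`. Hence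
`W(y) = W(qⁿy) → W(0) = z⁻¹ - z`, and `(1 - z²)(qz²;q)_∞ = (z²;q)_∞` gives the constant.
When `(qz^{±2};q)_∞ = 0` both sides vanish.
-/

/-- The finite q-Pochhammer symbol `(a;Q)_n = ∏_{j=0}^{n-1} (1 - a Q^j)`. -/
def qPoch (a Q : ℂ) (n : ℕ) : ℂ := ∏ j ∈ Finset.range n, (1 - a * Q ^ j)

/-- The infinite q-Pochhammer symbol `(a;Q)_∞ = ∏_{j=0}^{∞} (1 - a Q^j)`. -/
noncomputable def qPochInf (a Q : ℂ) : ℂ := ∏' j : ℕ, (1 - a * Q ^ j)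

/-- `ψ_n(w) = w^n (Q w²;Q)_∞ ₂φ₁(wτ, wτ⁻¹; Qw²; Q, α Q^{n+1})`; for `w = z` this is `ψ_n^+`
and for `w = z⁻¹` this is `ψ_n^-`. -/
noncomputable def psiAux (Q α w τ : ℂ) (n : ℤ) : ℂ :=
  w ^ n * qPochInf (Q * w ^ 2) Q *
    ∑' k : ℕ, qPoch (w * τ) Q k * qPoch (w * τ⁻¹) Q k /
      (qPoch (Q * w ^ 2) Q k * qPoch Q Q k) * (α * Q ^ (n + 1)) ^ k

open Filter Topology

section QPochhammer

variable {Q : ℂ}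

lemma qPoch_succ (a : ℂ) (k : ℕ) : qPoch a Q (k + 1) = qPoch a Q k * (1 - a * Q ^ k) :=
  Finset.prod_range_succ _ _

lemma summable_norm_mul_pow (hQ : ‖Q‖ < 1) (a : ℂ) : Summable fun j : ℕ => ‖a * Q ^ j‖ := by
  simpa [norm_mul, norm_pow] using
    (summable_geometric_of_lt_one (norm_nonneg Q) hQ).mul_left ‖a‖

lemma multipliable_one_sub_mul_pow (hQ : ‖Q‖ < 1) (a : ℂ) :
    Multipliable fun j : ℕ => 1 - a * Q ^ j := by
  simpa [sub_eq_add_neg] using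
    Complex.multipliable_one_add_of_summable (summable_norm_mul_pow hQ a).of_norm.neg

lemma tendsto_qPoch (hQ : ‖Q‖ < 1) (a : ℂ) :
    Tendsto (qPoch a Q) atTop (𝓝 (qPochInf a Q)) :=
  (multipliable_one_sub_mul_pow hQ a).hasProd.tendsto_prod_nat

lemma qPochInf_self_ne_zero (hQ : ‖Q‖ < 1) : qPochInf Q Q ≠ 0 := by
  have hfac : ∀ j : ℕ, 1 + -(Q * Q ^ j) ≠ 0 := fun j h => by
    have : ‖Q * Q ^ j‖ < 1 := by
      rw [← pow_succ', norm_pow]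
      exact pow_lt_one₀ (norm_nonneg Q) hQ j.succ_ne_zero
    rw [← sub_eq_add_neg, sub_eq_zero] at h
    simp [← h] at this
  simpa [qPochInf, sub_eq_add_neg] using
    tprod_one_add_ne_zero_of_summable hfac (by simpa using summable_norm_mul_pow hQ Q)

lemma one_sub_mul_pow_ne_zero_of_qPochInf_ne_zero {a : ℂ} (h : qPochInf a Q ≠ 0) (j : ℕ) :
    1 - a * Q ^ j ≠ 0 :=
  fun hj => h (tprod_of_exists_eq_zero ⟨j, hj⟩)

lemma qPoch_ne_zero_of_qPochInf_ne_zero {a : ℂ} (h : qPochInf a Q ≠ 0) (k : ℕ) :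
    qPoch a Q k ≠ 0 :=
  Finset.prod_ne_zero_iff.2 fun j _ => one_sub_mul_pow_ne_zero_of_qPochInf_ne_zero h j

lemma qPochInf_eq_one_sub_mul (hQ : ‖Q‖ < 1) (a : ℂ) :
    qPochInf a Q = (1 - a) * qPochInf (a * Q) Q := by
  have hshift : (fun j : ℕ => 1 - a * Q ^ (j + 1)) = fun j => 1 - a * Q * Q ^ j := by
    ext j; ring
  rw [qPochInf, tprod_eq_zero_mul' (hshift ▸ multipliable_one_sub_mul_pow hQ (a * Q)), hshift,
    pow_zero, mul_one, qPochInf]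

end QPochhammer

section BoundedCoefficients

variable {c : ℕ → ℂ} {M : ℝ}

lemma norm_pow_mul_lt_one {Q y : ℂ} (hQ : ‖Q‖ ≤ 1) (hy : ‖y‖ < 1) (n : ℕ) : ‖Q ^ n * y‖ < 1 := by
  rw [norm_mul, norm_pow]
  exact (mul_le_of_le_one_left (norm_nonneg y) (pow_le_one₀ (norm_nonneg Q) hQ)).trans_lt hy

lemma summable_mul_pow_of_norm_le (hc : ∀ k, ‖c k‖ ≤ M) {x : ℂ} (hx : ‖x‖ < 1) :
    Summable fun k => c k * x ^ k :=
  .of_norm_bounded ((summable_geometric_of_lt_one (norm_nonneg x) hx).mul_left M) fun k => by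
    rw [norm_mul, norm_pow]
    exact mul_le_mul_of_nonneg_right (hc k) (by positivity)

lemma tendsto_tsum_mul_pow_nhds_zero (hc : ∀ k, ‖c k‖ ≤ M) :
    Tendsto (fun x : ℂ => ∑' k, c k * x ^ k) (𝓝 0) (𝓝 (c 0)) := by
  have hcont : ContinuousOn (fun x : ℂ => ∑' k, c k * x ^ k) (Metric.closedBall 0 (1 / 2)) := by
    refine continuousOn_tsum (fun k => by fun_prop)
      ((summable_geometric_two).mul_left M) fun k x hx => ?_
    rw [norm_mul, norm_pow]
    have hx : ‖x‖ ≤ 1 / 2 := by simpa using hx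
    gcongr
    exacts [(norm_nonneg _).trans (hc 0), hc k]
  have hval : ∑' k, c k * (0 : ℂ) ^ k = c 0 := by
    rw [tsum_eq_single 0 fun k hk => by simp [hk]]
    simp
  simpa [hval] using (hcont.continuousAt (Metric.closedBall_mem_nhds 0 (by norm_num))).tendsto

lemma hasSum_mul_pow_of_succ_eq {a : ℕ → ℂ} {y s : ℂ} (hc : HasSum (fun k => c k * y ^ k) s)
    (h0 : a 0 = 0) (hsucc : ∀ k, a (k + 1) = c k) : HasSum (fun k => a k * y ^ k) (y * s) := by
  rw [← hasSum_nat_add_iff' 1]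
  simpa [h0, hsucc, pow_succ, mul_comm, mul_left_comm] using hc.mul_left y

lemma hasSum_mul_quadratic_mul_pow (hc : ∀ k, ‖c k‖ ≤ M) {Q y : ℂ} (hQ : ‖Q‖ ≤ 1)
    (hy : ‖y‖ < 1) (A B C : ℂ) :
    HasSum (fun k => c k * (A + B * Q ^ k + C * (Q ^ k) ^ 2) * y ^ k)
      (A * ∑' k, c k * y ^ k + B * ∑' k, c k * (Q * y) ^ k +
        C * ∑' k, c k * (Q ^ 2 * y) ^ k) := by
  have hQy : ‖Q * y‖ < 1 := by simpa using norm_pow_mul_lt_one hQ hy 1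
  refine ((((summable_mul_pow_of_norm_le hc hy).hasSum.mul_left A).add
    ((summable_mul_pow_of_norm_le hc hQy).hasSum.mul_left B)).add
    ((summable_mul_pow_of_norm_le hc (norm_pow_mul_lt_one hQ hy 2)).hasSum.mul_left C)).congr_fun
    fun k => ?_
  ring

end BoundedCoefficients

section Phi21

variable {Q τ w : ℂ}

/-- The coefficients of `₂φ₁(wτ, wτ⁻¹; Qw²; Q, x)`. -/
noncomputable def phi21Coeff (Q τ w : ℂ) (k : ℕ) : ℂ :=
  qPoch (w * τ) Q k * qPoch (w * τ⁻¹) Q k / (qPoch (Q * w ^ 2) Q k * qPoch Q Q k)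

noncomputable def phi21 (Q τ w x : ℂ) : ℂ := ∑' k, phi21Coeff Q τ w k * x ^ k

lemma phi21Coeff_zero : phi21Coeff Q τ w 0 = 1 := by simp [phi21Coeff, qPoch]

lemma exists_norm_phi21Coeff_le (hQ : ‖Q‖ < 1) (hw : qPochInf (Q * w ^ 2) Q ≠ 0) :
    ∃ M, ∀ k, ‖phi21Coeff Q τ w k‖ ≤ M := by
  have hlim := ((tendsto_qPoch hQ (w * τ)).mul (tendsto_qPoch hQ (w * τ⁻¹))).div
    ((tendsto_qPoch hQ _).mul (tendsto_qPoch hQ Q)) (mul_ne_zero hw (qPochInf_self_ne_zero hQ))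
  obtain ⟨M, hM⟩ := isBounded_iff_forall_norm_le.1 (Metric.isBounded_range_of_tendsto _ hlim)
  exact ⟨M, fun k => hM _ ⟨k, rfl⟩⟩

lemma phi21Coeff_succ_mul (hQ : ‖Q‖ < 1) (hw : qPochInf (Q * w ^ 2) Q ≠ 0) (k : ℕ) :
    phi21Coeff Q τ w (k + 1) * ((1 - Q ^ (k + 1)) * (1 - w ^ 2 * Q ^ (k + 1))) =
      phi21Coeff Q τ w k * ((1 - w * τ * Q ^ k) * (1 - w * τ⁻¹ * Q ^ k)) := by
  have h1 := qPoch_ne_zero_of_qPochInf_ne_zero hw k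
  have h2 := qPoch_ne_zero_of_qPochInf_ne_zero (qPochInf_self_ne_zero hQ) k
  have h3 := one_sub_mul_pow_ne_zero_of_qPochInf_ne_zero hw k
  have h4 := one_sub_mul_pow_ne_zero_of_qPochInf_ne_zero (qPochInf_self_ne_zero hQ) k
  rw [phi21Coeff, phi21Coeff, qPoch_succ, qPoch_succ, qPoch_succ, qPoch_succ, div_mul_eq_mul_div,
    div_mul_eq_mul_div, div_eq_div_iff (by positivity) (by positivity)]
  ring

lemma tendsto_phi21 (hQ : ‖Q‖ < 1) (hw : qPochInf (Q * w ^ 2) Q ≠ 0) :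
    Tendsto (phi21 Q τ w) (𝓝 0) (𝓝 1) := by
  obtain ⟨M, hM⟩ := exists_norm_phi21Coeff_le (τ := τ) hQ hw
  have := tendsto_tsum_mul_pow_nhds_zero hM
  rwa [phi21Coeff_zero] at this

theorem phi21_functional_eq (hQ : ‖Q‖ < 1) (hτ : τ ≠ 0) (hw : qPochInf (Q * w ^ 2) Q ≠ 0)
    {y : ℂ} (hy : ‖y‖ < 1) :
    (1 - y) * (phi21 Q τ w y + w ^ 2 * phi21 Q τ w (Q ^ 2 * y)) =
      (w ^ 2 + 1 - w * (τ + τ⁻¹) * y) * phi21 Q τ w (Q * y) := by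
  obtain ⟨M, hM⟩ := exists_norm_phi21Coeff_le (τ := τ) hQ hw
  have hlhs := hasSum_mul_quadratic_mul_pow hM hQ.le hy 1 (-(w ^ 2 + 1)) (w ^ 2)
  have hrhs := hasSum_mul_quadratic_mul_pow hM hQ.le hy 1 (-(w * (τ + τ⁻¹))) (w ^ 2)
  -- The coefficients of `hlhs` and `hrhs` factor as `c k (1 - Q^k)(1 - w²Q^k)` and
  -- `c k (1 - wτQ^k)(1 - wτ⁻¹Q^k)`, so the recurrence of `c` shifts one into the other.
  have key := hlhs.unique <| hasSum_mul_pow_of_succ_eq hrhs (by simp) fun k => by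
    linear_combination phi21Coeff_succ_mul (τ := τ) hQ hw k +
      phi21Coeff Q τ w k * w ^ 2 * (Q ^ k) ^ 2 * mul_inv_cancel₀ hτ
  unfold phi21
  linear_combination key

end Phi21

section Wronskian

variable {Q τ z : ℂ}

noncomputable def phiWronskian (Q τ z y : ℂ) : ℂ :=
  z⁻¹ * phi21 Q τ z y * phi21 Q τ z⁻¹ (Q * y) - z * phi21 Q τ z (Q * y) * phi21 Q τ z⁻¹ y

lemma tendsto_phiWronskian (hQ : ‖Q‖ < 1) (hzq : qPochInf (Q * z ^ 2) Q ≠ 0)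
    (hzq' : qPochInf (Q * z⁻¹ ^ 2) Q ≠ 0) :
    Tendsto (phiWronskian Q τ z) (𝓝 0) (𝓝 (z⁻¹ - z)) := by
  have hQy : Tendsto (fun y => Q * y) (𝓝 0) (𝓝 0) := by
    simpa using ((continuous_const_mul Q).tendsto 0)
  have hφ := tendsto_phi21 (τ := τ) hQ hzq
  have hφ' := tendsto_phi21 (τ := τ) hQ hzq'
  have h := (((tendsto_const_nhds (x := z⁻¹)).mul hφ).mul (hφ'.comp hQy)).sub
    (((tendsto_const_nhds (x := z)).mul (hφ.comp hQy)).mul hφ')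
  simp only [mul_one, Function.comp_def] at h
  exact h

lemma phiWronskian_mul_left (hQ : ‖Q‖ < 1) (hτ : τ ≠ 0) (hz : z ≠ 0)
    (hzq : qPochInf (Q * z ^ 2) Q ≠ 0) (hzq' : qPochInf (Q * z⁻¹ ^ 2) Q ≠ 0) {y : ℂ}
    (hy : ‖y‖ < 1) : phiWronskian Q τ z (Q * y) = phiWronskian Q τ z y := by
  have hfun := phi21_functional_eq hQ hτ hzq hy
  have hfun' := phi21_functional_eq hQ hτ hzq' hy
  have h1y : 1 - y ≠ 0 := sub_ne_zero.2 fun h => by simp [← h] at hy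
  refine mul_left_cancel₀ h1y ?_
  rw [phiWronskian, phiWronskian, show Q * (Q * y) = Q ^ 2 * y by ring]
  linear_combination (z * phi21 Q τ z (Q * y)) * hfun' - (z⁻¹ * phi21 Q τ z⁻¹ (Q * y)) * hfun -
    ((1 - y) * (z⁻¹ * phi21 Q τ z (Q * y) * phi21 Q τ z⁻¹ (Q ^ 2 * y) -
      z * phi21 Q τ z (Q ^ 2 * y) * phi21 Q τ z⁻¹ (Q * y)) +
      phi21 Q τ z (Q * y) * phi21 Q τ z⁻¹ (Q * y) * (z - z⁻¹)) * mul_inv_cancel₀ hz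

lemma phiWronskian_eq (hQ : ‖Q‖ < 1) (hτ : τ ≠ 0) (hz : z ≠ 0)
    (hzq : qPochInf (Q * z ^ 2) Q ≠ 0) (hzq' : qPochInf (Q * z⁻¹ ^ 2) Q ≠ 0) {y : ℂ}
    (hy : ‖y‖ < 1) : phiWronskian Q τ z y = z⁻¹ - z := by
  have hconst : ∀ n : ℕ, phiWronskian Q τ z (Q ^ n * y) = phiWronskian Q τ z y := by
    intro n
    induction n with
    | zero => simp
    | succ n ih =>
      rw [pow_succ', mul_assoc,
        phiWronskian_mul_left hQ hτ hz hzq hzq' (norm_pow_mul_lt_one hQ.le hy n), ih]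
  have hlim := (tendsto_phiWronskian (τ := τ) hQ hzq hzq').comp <| by
    simpa using (tendsto_pow_atTop_nhds_zero_of_norm_lt_one hQ).mul_const y
  simp only [Function.comp_def, hconst] at hlim
  exact tendsto_nhds_unique tendsto_const_nhds hlim

end Wronskian

lemma psiAux_natCast (Q α w τ : ℂ) (n : ℕ) :
    psiAux Q α w τ n = w ^ n * qPochInf (Q * w ^ 2) Q * phi21 Q τ w (α * Q ^ (n + 1)) := by
  rw [psiAux, ← Nat.cast_add_one, zpow_natCast, zpow_natCast]
  rfl

lemma psiAux_wronskian {Q α z τ : ℂ} (hz : z ≠ 0) (n : ℕ) :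
    psiAux Q α z τ n * psiAux Q α z⁻¹ τ (n + 1) - psiAux Q α z τ (n + 1) * psiAux Q α z⁻¹ τ n =
      qPochInf (Q * z ^ 2) Q * qPochInf (Q * z⁻¹ ^ 2) Q * phiWronskian Q τ z (α * Q ^ (n + 1)) := by
  rw [← Nat.cast_add_one, psiAux_natCast, psiAux_natCast, psiAux_natCast, psiAux_natCast,
    phiWronskian, show Q * (α * Q ^ (n + 1)) = α * Q ^ (n + 1 + 1) by ring]
  simp only [inv_pow]
  field_simp
  ring

theorem stmt_6_general (q : ℝ) (hq : q ∈ Set.Ioo (0 : ℝ) 1) (α z τ : ℂ)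
    (hα : ‖α‖ < 1) (hz : z ≠ 0) (hτ : τ ≠ 0) :
    ∀ n : ℕ,
      psiAux (q : ℂ) α z τ n * psiAux (q : ℂ) α z⁻¹ τ (n + 1) -
        psiAux (q : ℂ) α z τ (n + 1) * psiAux (q : ℂ) α z⁻¹ τ n =
      z⁻¹ * qPochInf (z ^ 2) (q : ℂ) * qPochInf ((q : ℂ) * z⁻¹ ^ 2) (q : ℂ) := by
  intro n
  have hQ : ‖(q : ℂ)‖ < 1 := by
    rw [Complex.norm_real, Real.norm_of_nonneg hq.1.le]
    exact hq.2
  have hy : ‖α * (q : ℂ) ^ (n + 1)‖ < 1 := mul_comm α _ ▸ norm_pow_mul_lt_one hQ.le hα (n + 1)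
  rw [psiAux_wronskian hz, qPochInf_eq_one_sub_mul hQ (z ^ 2), mul_comm (z ^ 2)]
  rcases eq_or_ne (qPochInf (q * z ^ 2) q) 0 with hzq | hzq
  · rw [hzq]; ring
  rcases eq_or_ne (qPochInf (q * z⁻¹ ^ 2) q) 0 with hzq' | hzq'
  · rw [hzq']; ring
  rw [phiWronskian_eq hQ hτ hz hzq hzq' hy]
  field_simp

theorem stmt_6 (q : ℝ) (hq : q ∈ Set.Ioo (0 : ℝ) 1) (α β z τ : ℂ)
    (hα : ‖α‖ < 1) (hz : z ≠ 0) (hτ : τ ≠ 0)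
    (hrel : α * τ + α * τ⁻¹ = β * z + β * z⁻¹) :
    ∀ n : ℕ,
      psiAux (q : ℂ) α z τ n * psiAux (q : ℂ) α z⁻¹ τ (n + 1) -
        psiAux (q : ℂ) α z τ (n + 1) * psiAux (q : ℂ) α z⁻¹ τ n =
      z⁻¹ * qPochInf (z ^ 2) (q : ℂ) * qPochInf ((q : ℂ) * z⁻¹ ^ 2) (q : ℂ) :=
  stmt_6_general q hq α z τ hα hz hτ
end

section
/- Let q ∈ (0,1) and β ∈ (q,1). The function g(z) = z⁻¹ ∏_{k=1}^∞ (1 - β(1+z²)q^{k-1} + z²q^{2k}) has positive real zeros exactly at the points z_k = √((q^{1-k} - β)/(β - q^{k+1})), k ∈ ℕ. -/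
open Filter Finset Real Topology

theorem stmt_10 (q β : ℝ) (hq : q ∈ Set.Ioo (0 : ℝ) 1) (hβ : β ∈ Set.Ioo q 1) :
    ∀ z : ℝ, 0 < z →
      ((z⁻¹ * ∏' k : ℕ, (1 - β * (1 + z ^ 2) * q ^ k + z ^ 2 * q ^ (2 * (k + 1)))) = 0 ↔
        ∃ k : ℕ, 1 ≤ k ∧
          z = Real.sqrt ((q ^ ((1 : ℤ) - k) - β) / (β - q ^ ((k : ℤ) + 1)))) := by
  obtain ⟨hq0, hq1⟩ := hq
  obtain ⟨hβq, hβ1⟩ := hβ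
  have hβ0 : 0 < β := hq0.trans hβq
  intro z hz
  set f : ℕ → ℝ := fun k => 1 - β * (1 + z ^ 2) * q ^ k + z ^ 2 * q ^ (2 * (k + 1)) with hfdef
  have hqpow : ∀ j : ℕ, 0 < q ^ j := fun j => pow_pos hq0 j
  have hqβ : ∀ j : ℕ, q ^ (j + 2) < β := by
    intro j
    calc q ^ (j + 2) ≤ q ^ 2 := pow_le_pow_of_le_one hq0.le hq1.le (by omega)
      _ < q := by nlinarith
      _ < β := hβq
  have hBpos : ∀ j : ℕ, 0 < q ^ j * (β - q ^ (j + 2)) :=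
    fun j => mul_pos (hqpow j) (sub_pos.2 (hqβ j))
  have hApos : ∀ j : ℕ, 0 < 1 - β * q ^ j := by
    intro j
    have h1 : q ^ j ≤ 1 := pow_le_one₀ hq0.le hq1.le
    nlinarith
  have hfac : ∀ j : ℕ, f j = (1 - β * q ^ j) - z ^ 2 * (q ^ j * (β - q ^ (j + 2))) := by
    intro j
    have h : q ^ (2 * (j + 1)) = q ^ j * q ^ (j + 2) := by
      rw [← pow_add]; ring_nf
    simp only [hfdef, h]; ring
  have hzero_iff : ∀ j : ℕ, f j = 0 ↔
      z = Real.sqrt ((1 - β * q ^ j) / (q ^ j * (β - q ^ (j + 2)))) := by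
    intro j
    rw [hfac j]
    constructor
    · intro h0
      have hzsq : z ^ 2 = (1 - β * q ^ j) / (q ^ j * (β - q ^ (j + 2))) := by
        rw [eq_div_iff (hBpos j).ne']; linarith
      rw [← hzsq, Real.sqrt_sq hz.le]
    · intro h
      have hEnn : 0 ≤ (1 - β * q ^ j) / (q ^ j * (β - q ^ (j + 2))) :=
        div_nonneg (hApos j).le (hBpos j).le
      have hzsq : z ^ 2 = (1 - β * q ^ j) / (q ^ j * (β - q ^ (j + 2))) := by
        rw [h, Real.sq_sqrt hEnn]
      have hmc : (1 - β * q ^ j) / (q ^ j * (β - q ^ (j + 2))) *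
          (q ^ j * (β - q ^ (j + 2))) = 1 - β * q ^ j :=
        div_mul_cancel₀ _ (hBpos j).ne'
      rw [hzsq]; linarith
  have hmatch : ∀ j : ℕ,
      (q ^ ((1 : ℤ) - ((j + 1 : ℕ) : ℤ)) - β) / (β - q ^ (((j + 1 : ℕ) : ℤ) + 1)) =
        (1 - β * q ^ j) / (q ^ j * (β - q ^ (j + 2))) := by
    intro j
    have h1 : (1 : ℤ) - ((j + 1 : ℕ) : ℤ) = -(j : ℤ) := by push_cast; ring
    have h2 : ((j + 1 : ℕ) : ℤ) + 1 = ((j + 2 : ℕ) : ℤ) := by push_cast; ring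
    rw [h1, h2, zpow_neg, zpow_natCast, zpow_natCast]
    rw [div_eq_div_iff (sub_pos.2 (hqβ j)).ne' (hBpos j).ne']
    field_simp
  constructor
  · intro h0
    by_contra hno
    push_neg at hno
    have hne : ∀ j : ℕ, f j ≠ 0 := by
      intro j hj0
      exact hno (j + 1) (Nat.le_add_left 1 j)
        (((hzero_iff j).1 hj0).trans (congrArg Real.sqrt (hmatch j)).symm)
    -- choose N so that the tail factors are in [1/2, 1)
    have hten : Tendsto (fun k : ℕ => q ^ k) atTop (𝓝 0) :=
      tendsto_pow_atTop_nhds_zero_of_lt_one hq0.le hq1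
    have hεpos : (0 : ℝ) < 1 / (2 * (β * (1 + z ^ 2))) := by positivity
    obtain ⟨N, hN⟩ := eventually_atTop.1 (hten.eventually (gt_mem_nhds hεpos))
    have ht : ∀ k, N ≤ k → β * (1 + z ^ 2) * q ^ k ≤ 1 / 2 := by
      intro k hk
      have h := hN k hk
      rw [lt_div_iff₀ (by positivity : (0:ℝ) < 2 * (β * (1 + z ^ 2)))] at h
      nlinarith
    have hghalf : ∀ n : ℕ, 1 / 2 ≤ f (n + N) := by
      intro n
      have h1 := ht (n + N) (Nat.le_add_left N n)
      have h2 : 0 ≤ z ^ 2 * q ^ (2 * (n + N + 1)) := by positivity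
      simp only [hfdef]; linarith
    have hgpos : ∀ n : ℕ, 0 < f (n + N) := fun n => lt_of_lt_of_le one_half_pos (hghalf n)
    have hflt1 : ∀ k : ℕ, f k < 1 := by
      intro k
      have e : q ^ (2 * (k + 1)) = q ^ k * q ^ (k + 2) := by rw [← pow_add]; ring_nf
      have key : 0 < q ^ k * ((β - q ^ (k + 2)) * z ^ 2 + β) :=
        mul_pos (hqpow k) (by nlinarith [mul_pos (sub_pos.2 (hqβ k)) (pow_pos hz 2)])
      simp only [hfdef, e]
      nlinarith [key]
    have hub : ∀ n : ℕ, -Real.log (f (n + N)) ≤ (2 * (β * (1 + z ^ 2)) * q ^ N) * q ^ n := by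
      intro n
      have hx := hgpos n
      have h1 : Real.log (f (n + N))⁻¹ ≤ (f (n + N))⁻¹ - 1 :=
        Real.log_le_sub_one_of_pos (inv_pos.2 hx)
      rw [Real.log_inv] at h1
      have h2 : (f (n + N))⁻¹ ≤ 2 := by
        rw [inv_le_comm₀ hx (by norm_num : (0:ℝ) < 2)]
        linarith [hghalf n]
      have h1x : 1 - f (n + N) ≤ β * (1 + z ^ 2) * q ^ (n + N) := by
        have h2' : 0 ≤ z ^ 2 * q ^ (2 * (n + N + 1)) := by positivity
        simp only [hfdef]; linarith
      have hqe : q ^ N * q ^ n = q ^ (n + N) := by rw [← pow_add]; ring_nf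
      have hprod : 0 ≤ (1 - f (n + N)) * (2 - (f (n + N))⁻¹) :=
        mul_nonneg (sub_nonneg.2 (hflt1 (n + N)).le) (sub_nonneg.2 h2)
      have key : (f (n + N))⁻¹ - 1 ≤ 2 * (1 - f (n + N)) := by
        nlinarith [hprod, mul_inv_cancel₀ hx.ne']
      calc -Real.log (f (n + N)) ≤ (f (n + N))⁻¹ - 1 := h1
        _ ≤ 2 * (1 - f (n + N)) := key
        _ ≤ 2 * (β * (1 + z ^ 2) * q ^ (n + N)) :=
            mul_le_mul_of_nonneg_left h1x (by norm_num)
        _ = 2 * (β * (1 + z ^ 2)) * q ^ N * q ^ n := by rw [← hqe]; ring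
    have hneg : ∀ n : ℕ, 0 ≤ -Real.log (f (n + N)) := fun n =>
      neg_nonneg.2 (Real.log_nonpos (hgpos n).le (hflt1 (n + N)).le)
    have hgeo : Summable (fun n : ℕ => (2 * (β * (1 + z ^ 2)) * q ^ N) * q ^ n) :=
      (summable_geometric_of_lt_one hq0.le hq1).mul_left _
    have h3 : Summable (fun n : ℕ => -Real.log (f (n + N))) :=
      Summable.of_nonneg_of_le hneg hub hgeo
    have hlogsum : Summable (fun n : ℕ => Real.log (f (n + N))) := by
      simpa using h3.neg
    have hHP : HasProd (fun n : ℕ => f (n + N))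
        (Real.exp (∑' n : ℕ, Real.log (f (n + N)))) := by
      have h := hlogsum.hasSum.rexp
      have hfun : (rexp ∘ fun n : ℕ => Real.log (f (n + N))) = fun n : ℕ => f (n + N) :=
        funext fun n => Real.exp_log (hgpos n)
      rwa [hfun] at h
    have hHPf : HasProd f ((∏ i ∈ Finset.range N, f i) *
        Real.exp (∑' n : ℕ, Real.log (f (n + N)))) := hHP.prod_range_mul
    rw [hHPf.tprod_eq] at h0
    rcases mul_eq_zero.1 h0 with h | h
    · exact inv_ne_zero hz.ne' h
    rcases mul_eq_zero.1 h with h | h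
    · obtain ⟨i, _, hi⟩ := Finset.prod_eq_zero_iff.1 h
      exact hne i hi
    · exact Real.exp_ne_zero _ h
  · rintro ⟨k, hk, hzk⟩
    obtain ⟨j, rfl⟩ : ∃ j, k = j + 1 := ⟨k - 1, by omega⟩
    have hfj : f j = 0 :=
      (hzero_iff j).2 (hzk.trans (congrArg Real.sqrt (hmatch j)))
    have hHP0 : HasProd f 0 := by
      have hev : ∀ᶠ s : Finset ℕ in atTop, ∏ i ∈ s, f i = 0 := by
        filter_upwards [eventually_ge_atTop ({j} : Finset ℕ)] with s hs
        exact Finset.prod_eq_zero (hs (Finset.mem_singleton_self j)) hfj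
      exact (tendsto_congr' hev).2 tendsto_const_nhds
    rw [hHP0.tprod_eq, mul_zero]
end

section
/- Consider the nonlinear map T on ℓ^∞(ℕ×ℕ) defined by (Tx)_{m,n} = 1 if m = n, and (Tx)_{m,n} = (γ_m/4)(x_{m+1,n} + x_{m-1,n}) + (γ_n/4)(x_{m,n+1} + x_{m,n-1}) if m ≠ n, with the convention x_{0,n} = x_{m,0} = 0, where γ_n = (1 - q^n)/(1 + q^n) for some q ∈ (0,1). Then T is a contraction: ‖Tx - Ty‖_∞ ≤ δ‖x - y‖_∞ with δ = (1-q)/(1+q) < 1; consequently T has a unique fixed point in ℓ^∞(ℕ×ℕ). -/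
/-- The map `T` from the two-spin correlation stationary problem: indices start at `1`,
entries with an index equal to `0` are treated as `0`. -/
noncomputable def Tmap (γ : ℕ → ℝ) (x : ℕ × ℕ → ℝ) : ℕ × ℕ → ℝ := fun p =>
  let x' : ℕ × ℕ → ℝ := fun r => if r.1 = 0 ∨ r.2 = 0 then 0 else x r
  if p.1 = p.2 then 1
  else γ p.1 / 4 * (x' (p.1 + 1, p.2) + x' (p.1 - 1, p.2)) +
    γ p.2 / 4 * (x' (p.1, p.2 + 1) + x' (p.1, p.2 - 1))

lemma Tmap_contract (γ : ℕ → ℝ) (δ : ℝ) (hδ0 : 0 ≤ δ)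
    (hγ : ∀ n : ℕ, |γ n| ≤ δ) (x y : ℕ × ℕ → ℝ) (C : ℝ)
    (hC : ∀ p, |x p - y p| ≤ C) (p : ℕ × ℕ) :
    |Tmap γ x p - Tmap γ y p| ≤ δ * C := by
  have hC0 : (0:ℝ) ≤ C := le_trans (abs_nonneg _) (hC (1,1))
  set x' : ℕ × ℕ → ℝ := fun r => if r.1 = 0 ∨ r.2 = 0 then 0 else x r with hx'
  set y' : ℕ × ℕ → ℝ := fun r => if r.1 = 0 ∨ r.2 = 0 then 0 else y r with hy'
  have hd : ∀ r : ℕ × ℕ, |x' r - y' r| ≤ C := by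
    intro r
    simp only [hx', hy']
    split_ifs with h
    · simpa using hC0
    · exact hC r
  by_cases h : p.1 = p.2
  · have : Tmap γ x p - Tmap γ y p = 0 := by simp [Tmap, h]
    rw [this, abs_zero]
    exact mul_nonneg hδ0 hC0
  · have key : Tmap γ x p - Tmap γ y p =
        γ p.1 / 4 * ((x' (p.1 + 1, p.2) - y' (p.1 + 1, p.2)) +
          (x' (p.1 - 1, p.2) - y' (p.1 - 1, p.2))) +
        γ p.2 / 4 * ((x' (p.1, p.2 + 1) - y' (p.1, p.2 + 1)) +
          (x' (p.1, p.2 - 1) - y' (p.1, p.2 - 1))) := by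
      simp only [Tmap, if_neg h]
      ring
    rw [key]
    have b1 := hd (p.1 + 1, p.2); have b2 := hd (p.1 - 1, p.2)
    have b3 := hd (p.1, p.2 + 1); have b4 := hd (p.1, p.2 - 1)
    have g1 := hγ p.1; have g2 := hγ p.2
    set u := x' (p.1 + 1, p.2) - y' (p.1 + 1, p.2) + (x' (p.1 - 1, p.2) - y' (p.1 - 1, p.2)) with hu
    set v := x' (p.1, p.2 + 1) - y' (p.1, p.2 + 1) + (x' (p.1, p.2 - 1) - y' (p.1, p.2 - 1)) with hv
    have s1 : |u| ≤ 2 * C := (abs_add_le _ _).trans (by linarith)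
    have s2 : |v| ≤ 2 * C := (abs_add_le _ _).trans (by linarith)
    have e : |γ p.1 / 4 * u + γ p.2 / 4 * v| ≤ |γ p.1| / 4 * |u| + |γ p.2| / 4 * |v| := by
      calc |γ p.1 / 4 * u + γ p.2 / 4 * v| ≤ |γ p.1 / 4 * u| + |γ p.2 / 4 * v| := abs_add_le _ _
        _ = |γ p.1| / 4 * |u| + |γ p.2| / 4 * |v| := by
            rw [abs_mul, abs_mul, abs_div, abs_div]; norm_num
    refine e.trans ?_
    nlinarith [abs_nonneg u, abs_nonneg v, abs_nonneg (γ p.1), abs_nonneg (γ p.2), g1, g2, s1, s2, hC0]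

theorem stmt_16 (γ : ℕ → ℝ) (δ : ℝ) (hδ0 : 0 ≤ δ) (hδ1 : δ < 1)
    (hγ : ∀ n : ℕ, |γ n| ≤ δ) :
    (∀ x y : ℕ × ℕ → ℝ, ∀ C : ℝ, (∀ p, |x p - y p| ≤ C) →
      ∀ p, |Tmap γ x p - Tmap γ y p| ≤ δ * C) ∧
    (∃! x : {f : ℕ × ℕ → ℝ // BddAbove (Set.range fun p => |f p|)},
      Tmap γ x.1 = x.1) := by
  have contract := Tmap_contract γ δ hδ0 hγ
  refine ⟨contract, ?_⟩
  -- bound for Tmap of a bounded function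
  have Tbound : ∀ (f : ℕ × ℕ → ℝ) (M : ℝ), (∀ p, |f p| ≤ M) →
      ∀ p, |Tmap γ f p| ≤ δ * M + 1 := by
    intro f M hM p
    have h0 : ∀ p, |f p - (0 : ℕ × ℕ → ℝ) p| ≤ M := by simpa using hM
    have h1 := contract f 0 M h0 p
    have h2 : |Tmap γ (0 : ℕ × ℕ → ℝ) p| ≤ 1 := by
      simp only [Tmap]
      split_ifs <;> simp
    calc |Tmap γ f p| = |(Tmap γ f p - Tmap γ 0 p) + Tmap γ 0 p| := by ring_nf
      _ ≤ |Tmap γ f p - Tmap γ 0 p| + |Tmap γ 0 p| := abs_add_le _ _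
      _ ≤ δ * M + 1 := add_le_add h1 h2
  -- the induced map on bounded continuous functions
  let Φ : BoundedContinuousFunction (ℕ × ℕ) ℝ → BoundedContinuousFunction (ℕ × ℕ) ℝ :=
    fun f => BoundedContinuousFunction.ofNormedAddCommGroup (Tmap γ f)
      (continuous_of_discreteTopology) (δ * ‖f‖ + 1)
      (fun p => by
        simpa using Tbound f ‖f‖ (fun q => by
          simpa [Real.norm_eq_abs] using f.norm_coe_le_norm q) p)
  have hΦcoe : ∀ f, ⇑(Φ f) = Tmap γ f := fun f => rfl
  set K : NNReal := ⟨δ, hδ0⟩ with hKdef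
  have hK : ContractingWith K Φ := by
    constructor
    · exact_mod_cast hδ1
    · intro f g
      rw [edist_dist, edist_dist]
      have hdist : dist (Φ f) (Φ g) ≤ δ * dist f g := by
        rw [BoundedContinuousFunction.dist_le (mul_nonneg hδ0 dist_nonneg)]
        intro p
        rw [hΦcoe, hΦcoe, Real.dist_eq]
        exact contract f g (dist f g)
          (fun q => by rw [← Real.dist_eq]; exact f.dist_coe_le_dist q) p
      have hcast : ENNReal.ofReal δ = (K : ENNReal) := ENNReal.ofReal_eq_coe_nnreal hδ0
      calc ENNReal.ofReal (dist (Φ f) (Φ g)) ≤ ENNReal.ofReal (δ * dist f g) :=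
            ENNReal.ofReal_le_ofReal hdist
        _ = ENNReal.ofReal δ * ENNReal.ofReal (dist f g) := ENNReal.ofReal_mul hδ0
        _ = (K : ENNReal) * ENNReal.ofReal (dist f g) := by rw [hcast]
  -- fixed point of Φ
  let F := hK.fixedPoint Φ
  have hF : Φ F = F := hK.fixedPoint_isFixedPt
  have hFfix : Tmap γ ⇑F = ⇑F := by rw [← hΦcoe F]; exact congrArg _ hF
  -- translate to the subtype
  have bddF : BddAbove (Set.range fun p => |(F : (ℕ × ℕ) → ℝ) p|) := by
    refine ⟨‖F‖, ?_⟩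
    rintro _ ⟨p, rfl⟩
    simpa [Real.norm_eq_abs] using F.norm_coe_le_norm p
  refine ⟨⟨⇑F, bddF⟩, hFfix, ?_⟩
  rintro ⟨g, hg⟩ hgfix
  obtain ⟨M, hM⟩ := hg
  have hM' : ∀ p, |g p| ≤ M := fun p => hM ⟨p, rfl⟩
  let G : BoundedContinuousFunction (ℕ × ℕ) ℝ :=
    BoundedContinuousFunction.ofNormedAddCommGroup g continuous_of_discreteTopology M
      (fun p => by simpa [Real.norm_eq_abs] using hM' p)
  have hGcoe : ⇑G = g := rfl
  have hGfix : Φ G = G := by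
    apply BoundedContinuousFunction.ext
    intro p
    have : Tmap γ g p = g p := congrFun hgfix p
    simpa [hΦcoe, hGcoe] using this
  have : G = F := hK.fixedPoint_unique hGfix
  apply Subtype.ext
  simp only
  rw [← hGcoe, this]
end
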